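/- Let n ≥ 5 and let t₁,…,t_{n-1}, u be rational numbers. Set P = (t₁u² + (t₁+t₂-2t_{n-1})u + t₂)/(u²+1) and Q = ((t₁+t₂-t_{n-1})u² + (t₂-t₁)u + t_{n-1})/(u²+1), and define x₁ = P, x₂ = Q, x₃ = t₁+t₂-Q, x₄ = t₁+t₂-P, and xᵢ = t_{i-2} for 5 ≤ i ≤ n. Then σⱼ(x₁,…,xₙ) = σⱼ(t₁,…,t_{n-1}, t₁+t₂-t_{n-1}) for j = 1, 2, 3. -/
import Mathlib


/-- The `k`-th elementary symmetric function of a multiset of rationals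
(`esymm s 0 = 1`, and `esymm s k = 0` for `k > card s`). -/
def esymm (s : Multiset ℚ) (k : ℕ) : ℚ := ((s.powersetCard k).map Multiset.prod).sum

/-- Elementary symmetric function with integer index: `0` for negative indices. -/
def esymmZ (s : Multiset ℚ) (k : ℤ) : ℚ := if k < 0 then 0 else esymm s k.toNat

/-- The `k`-th elementary symmetric polynomial evaluated at a tuple. -/
def sigma {n : ℕ} (x : Fin n → ℚ) (k : ℕ) : ℚ := esymm (Multiset.map x Finset.univ.val) k

lemma esymm_zero (s : Multiset ℚ) : esymm s 0 = 1 := by simp [esymm]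

lemma esymm_cons (a : ℚ) (s : Multiset ℚ) (k : ℕ) :
    esymm (a ::ₘ s) (k + 1) = a * esymm s k + esymm s (k + 1) := by
  simp only [esymm, Multiset.powersetCard_cons, Multiset.map_add, Multiset.sum_add,
    Multiset.map_map, Function.comp_def, Multiset.prod_cons]
  rw [add_comm, Multiset.sum_map_mul_left]

lemma quad (a b c d a' b' c' d' : ℚ) (S : Multiset ℚ)
    (h1 : a + b + c + d = a' + b' + c' + d')
    (h2 : a*b + a*c + a*d + b*c + b*d + c*d = a'*b' + a'*c' + a'*d' + b'*c' + b'*d' + c'*d')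
    (h3 : a*b*c + a*b*d + a*c*d + b*c*d = a'*b'*c' + a'*b'*d' + a'*c'*d' + b'*c'*d') :
    esymm (a ::ₘ b ::ₘ c ::ₘ d ::ₘ S) 1 = esymm (a' ::ₘ b' ::ₘ c' ::ₘ d' ::ₘ S) 1 ∧
    esymm (a ::ₘ b ::ₘ c ::ₘ d ::ₘ S) 2 = esymm (a' ::ₘ b' ::ₘ c' ::ₘ d' ::ₘ S) 2 ∧
    esymm (a ::ₘ b ::ₘ c ::ₘ d ::ₘ S) 3 = esymm (a' ::ₘ b' ::ₘ c' ::ₘ d' ::ₘ S) 3 := by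
  have h0 : (1 : ℕ) = 0 + 1 := rfl
  have ha : (2 : ℕ) = 1 + 1 := rfl
  have hb : (3 : ℕ) = 2 + 1 := rfl
  refine ⟨?_, ?_, ?_⟩
  · rw [h0]; simp only [esymm_cons, esymm_zero]; linear_combination h1
  · rw [ha, h0]; simp only [esymm_cons, esymm_zero]
    linear_combination h2 + esymm S 1 * h1
  · rw [hb, ha, h0]; simp only [esymm_cons, esymm_zero]
    linear_combination h3 + esymm S 1 * h2 + esymm S 2 * h1

lemma icc_decomp (n : ℕ) (hn : 5 ≤ n) :
    (Finset.Icc 1 (n-1)).val = 1 ::ₘ 2 ::ₘ (n-1) ::ₘ (Finset.Icc 3 (n-2)).val := by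
  obtain ⟨m, rfl⟩ := Nat.exists_eq_add_of_le hn
  have e1 : 5 + m - 1 = m + 4 := by omega
  have e2 : 5 + m - 2 = m + 3 := by omega
  rw [e1, e2]
  rw [Finset.Icc_eq_cons_Ioc (by omega), Finset.cons_val, ← Finset.Icc_add_one_left_eq_Ioc]
  rw [Finset.Icc_eq_cons_Ioc (by omega), Finset.cons_val, ← Finset.Icc_add_one_left_eq_Ioc]
  norm_num
  rw [Finset.Icc_eq_cons_Ico (by omega), Finset.cons_val,
    show m + 4 = (m+3) + 1 from rfl, Finset.Ico_add_one_right_eq_Icc]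


theorem stmt15 (n : ℕ) (hn : 5 ≤ n) (t : ℕ → ℚ) (u : ℚ) :
    let P := (t 1 * u ^ 2 + (t 1 + t 2 - 2 * t (n - 1)) * u + t 2) / (u ^ 2 + 1)
    let Q := ((t 1 + t 2 - t (n - 1)) * u ^ 2 + (t 2 - t 1) * u + t (n - 1)) / (u ^ 2 + 1)
    let xM : Multiset ℚ :=
      {P, Q, t 1 + t 2 - Q, t 1 + t 2 - P} + (Finset.Icc 3 (n - 2)).val.map t
    let tM : Multiset ℚ :=
      (Finset.Icc 1 (n - 1)).val.map t + {t 1 + t 2 - t (n - 1)}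
    esymm xM 1 = esymm tM 1 ∧ esymm xM 2 = esymm tM 2 ∧ esymm xM 3 = esymm tM 3 := by
  intro P Q xM tM
  set S : Multiset ℚ := (Finset.Icc 3 (n - 2)).val.map t with hS
  have hx : xM = P ::ₘ Q ::ₘ (t 1 + t 2 - Q) ::ₘ (t 1 + t 2 - P) ::ₘ S := by
    show {P, Q, t 1 + t 2 - Q, t 1 + t 2 - P} + S = _
    simp only [Multiset.insert_eq_cons, Multiset.cons_add, Multiset.singleton_add]
  have ht : tM = t 1 ::ₘ t 2 ::ₘ t (n-1) ::ₘ (t 1 + t 2 - t (n-1)) ::ₘ S := by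
    show (Finset.Icc 1 (n - 1)).val.map t + {t 1 + t 2 - t (n - 1)} = _
    rw [icc_decomp n hn]
    simp only [Multiset.map_cons]
    rw [Multiset.cons_add, Multiset.cons_add, Multiset.cons_add,
      add_comm _ ({t 1 + t 2 - t (n-1)} : Multiset ℚ), Multiset.singleton_add]
  rw [hx, ht]
  have hu : u ^ 2 + 1 ≠ 0 := by positivity
  apply quad
  · unfold P Q; field_simp; ring
  · unfold P Q; field_simp; ring
  · unfold P Q; field_simp; ring
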